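/- Let (ρₙ, mₙ) be sequences with ρₙ > 0, mₙ ∈ ℝᵈ-valued measurable functions on a bounded domain, such that mₙ ⇀ m and ρₙ ⇀ ρ weakly in L¹, and (mₙ ⊗ mₙ)/ρₙ ⇀* R weakly-* in matrix-valued measures. Then for every ξ ∈ ℝᵈ, the measure R:(ξ⊗ξ) − (|m·ξ|²/ρ) dx is non-negative; i.e., the defect R − (m⊗m)/ρ dx takes values in positive semi-definite matrices. -/

import Mathlib

open MeasureTheory Filter
open scoped Topology

/-!
For `ρ > 0` and every real `λ`, `2 λ s - λ² ρ ≤ s² / ρ`, with equality at `λ = s / ρ`. For a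
fixed bounded test multiplier `λ` the left side is linear in `(s, ρ)`, so the inequality
survives weak limits: `∫ (2 λ s - λ² ρ) φ ≤ ξᵀ R ξ (φ)` with `s = m · ξ`. Letting `λ` run
through the truncations of `s / ρ` at levels `k → ∞`, dominated convergence (with dominating
function `3 |s² / ρ|`) turns the left side into `∫ (s² / ρ) φ`.
-/

def WeakL1Tendsto {α : Type*} [MeasurableSpace α] (μ : Measure α) (f : ℕ → α → ℝ)
    (F : α → ℝ) : Prop :=
  ∀ g : α → ℝ, Measurable g → (∃ C, ∀ x, |g x| ≤ C) →
    Tendsto (fun n => ∫ x, f n x * g x ∂μ) atTop (𝓝 (∫ x, F x * g x ∂μ))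

lemma two_mul_mul_sub_sq_mul_le_sq_div {l s r : ℝ} (hr : 0 < r) :
    2 * l * s - l ^ 2 * r ≤ s ^ 2 / r := by
  rw [le_div_iff₀ hr]
  nlinarith [sq_nonneg (s - l * r)]

lemma div_sq_mul_self (s r : ℝ) : (s / r) ^ 2 * r = s ^ 2 / r := by
  rcases eq_or_ne r 0 with rfl | hr
  · simp
  · field_simp

-- Also at `r = 0`, where both sides are `0` because `s / 0 = 0`.
lemma two_mul_div_mul_sub_div_sq_mul (s r : ℝ) :
    2 * (s / r) * s - (s / r) ^ 2 * r = s ^ 2 / r := by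
  rw [div_sq_mul_self]
  ring

lemma abs_two_mul_mul_sub_sq_mul_le {l s r : ℝ} (hl : |l| ≤ |s / r|) :
    |2 * l * s - l ^ 2 * r| ≤ 3 * |s ^ 2 / r| := by
  have hls : |l * s| ≤ |s ^ 2 / r| := calc
    |l * s| = |l| * |s| := abs_mul l s
    _ ≤ |s / r| * |s| := by gcongr
    _ = |s ^ 2 / r| := by rw [← abs_mul]; ring_nf
  have hlr : |l ^ 2 * r| ≤ |s ^ 2 / r| := calc
    |l ^ 2 * r| = |l| ^ 2 * |r| := by rw [abs_mul, abs_pow]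
    _ ≤ |s / r| ^ 2 * |r| := by gcongr
    _ = |s ^ 2 / r| := by rw [← abs_pow, ← abs_mul, div_sq_mul_self]
  calc |2 * l * s - l ^ 2 * r| ≤ |2 * (l * s)| + |l ^ 2 * r| := by
        rw [mul_assoc]; exact abs_sub _ _
    _ ≤ 3 * |s ^ 2 / r| := by rw [abs_mul, abs_two]; linarith

lemma abs_mul_le_mul_of_abs_le {a b K C : ℝ} (ha : |a| ≤ K) (hb : |b| ≤ C) :
    |a * b| ≤ K * C := by
  rw [abs_mul]
  exact mul_le_mul ha hb (abs_nonneg b) ((abs_nonneg a).trans ha)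

lemma abs_max_neg_min_le {k t : ℝ} (hk : 0 ≤ k) : |max (-k) (min k t)| ≤ k :=
  abs_le.2 ⟨le_max_left _ _, max_le (by linarith) (min_le_left _ _)⟩

lemma abs_max_neg_min_le_abs {k t : ℝ} (hk : 0 ≤ k) : |max (-k) (min k t)| ≤ |t| :=
  abs_le.2 ⟨le_max_of_le_right (le_min (by linarith [abs_nonneg t]) (neg_abs_le t)),
    max_le (by linarith [abs_nonneg t]) (min_le_of_right_le (le_abs_self t))⟩

lemma max_neg_min_eq_self {k t : ℝ} (h : |t| ≤ k) : max (-k) (min k t) = t := by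
  rw [abs_le] at h
  rw [min_eq_right h.2, max_eq_right h.1]

lemma sum_mul_sq_div_mul {ι : Type*} [Fintype ι] (a ξ : ι → ℝ) (r w : ℝ) :
    (∑ i, a i * ξ i) ^ 2 / r * w = ∑ i, ∑ j, ξ i * ξ j * (a i * a j / r * w) := by
  rw [sq, Finset.sum_mul_sum]
  simp only [Finset.sum_div, Finset.sum_mul]
  exact Finset.sum_congr rfl fun i _ => Finset.sum_congr rfl fun j _ => by ring

section Integral

variable {α : Type*} [MeasurableSpace α] {μ : Measure α}

lemma integral_sum_mul_const_mul {ι : Type*} [Fintype ι] {f : α → ι → ℝ} {g : α → ℝ} {C : ℝ}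
    (c : ι → ℝ) (hf : ∀ i, Integrable (fun x => f x i) μ) (hg : AEStronglyMeasurable g μ)
    (hgC : ∀ x, |g x| ≤ C) :
    ∫ x, (∑ i, f x i * c i) * g x ∂μ = ∑ i, c i * ∫ x, f x i * g x ∂μ := by
  have hfg : ∀ i, Integrable (fun x => c i * (f x i * g x)) μ := fun i =>
    ((hf i).mul_bdd hg (ae_of_all _ hgC)).const_mul (c i)
  calc ∫ x, (∑ i, f x i * c i) * g x ∂μ = ∫ x, ∑ i, c i * (f x i * g x) ∂μ := by
        simp only [Finset.sum_mul]
        exact integral_congr_ae (ae_of_all _ fun x => Finset.sum_congr rfl fun i _ => by ring)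
    _ = ∑ i, c i * ∫ x, f x i * g x ∂μ := by
        rw [integral_finsetSum _ fun i _ => hfg i]
        simp only [integral_const_mul]

lemma WeakL1Tendsto.sum_mul_const {ι : Type*} [Fintype ι] {f : ℕ → α → ι → ℝ}
    {F : α → ι → ℝ} (c : ι → ℝ) (hf_int : ∀ n i, Integrable (fun x => f n x i) μ)
    (hF_int : ∀ i, Integrable (fun x => F x i) μ)
    (h : ∀ i, WeakL1Tendsto μ (fun n x => f n x i) fun x => F x i) :
    WeakL1Tendsto μ (fun n x => ∑ i, f n x i * c i) fun x => ∑ i, F x i * c i := by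
  intro g hg ⟨C, hgC⟩
  simp only [integral_sum_mul_const_mul c (hf_int _) hg.aestronglyMeasurable hgC,
    integral_sum_mul_const_mul c hF_int hg.aestronglyMeasurable hgC]
  exact tendsto_finsetSum _ fun i _ => (h i g hg ⟨C, hgC⟩).const_mul (c i)

lemma integrable_sum_mul_sq_div_mul {ι : Type*} [Fintype ι] {a : α → ι → ℝ} {r w : α → ℝ}
    (ξ : ι → ℝ) (h : ∀ i j, Integrable (fun x => a x i * a x j / r x * w x) μ) :
    Integrable (fun x => (∑ i, a x i * ξ i) ^ 2 / r x * w x) μ := by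
  simp only [sum_mul_sq_div_mul]
  exact integrable_finsetSum _ fun i _ => integrable_finsetSum _ fun j _ =>
    (h i j).const_mul (ξ i * ξ j)

lemma integral_sum_mul_sq_div_mul {ι : Type*} [Fintype ι] {a : α → ι → ℝ} {r w : α → ℝ}
    (ξ : ι → ℝ) (h : ∀ i j, Integrable (fun x => a x i * a x j / r x * w x) μ) :
    ∫ x, (∑ i, a x i * ξ i) ^ 2 / r x * w x ∂μ
      = ∑ i, ∑ j, ξ i * ξ j * ∫ x, a x i * a x j / r x * w x ∂μ := by
  simp only [sum_mul_sq_div_mul]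
  rw [integral_finsetSum _ fun i _ => integrable_finsetSum _ fun j _ =>
    (h i j).const_mul (ξ i * ξ j)]
  refine Finset.sum_congr rfl fun i _ => ?_
  rw [integral_finsetSum _ fun j _ => (h i j).const_mul (ξ i * ξ j)]
  simp only [integral_const_mul]

end Integral

section Duality

variable {α : Type*} [MeasurableSpace α] {μ : Measure α} {s ρ l w : α → ℝ} {K C : ℝ}

lemma integral_two_mul_mul_sub_sq_mul_mul (hs : Integrable s μ) (hρ : Integrable ρ μ)
    (hl : Measurable l) (hlK : ∀ x, |l x| ≤ K) (hw : Measurable w) (hwC : ∀ x, |w x| ≤ C) :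
    Integrable (fun x => (2 * l x * s x - l x ^ 2 * ρ x) * w x) μ ∧
      ∫ x, (2 * l x * s x - l x ^ 2 * ρ x) * w x ∂μ
        = 2 * ∫ x, s x * (l x * w x) ∂μ - ∫ x, ρ x * (l x * (l x * w x)) ∂μ := by
  have hs' : Integrable (fun x => 2 * (s x * (l x * w x))) μ :=
    (hs.mul_bdd (hl.mul hw).aestronglyMeasurable
      (ae_of_all _ fun x => abs_mul_le_mul_of_abs_le (hlK x) (hwC x))).const_mul 2
  have hρ' : Integrable (fun x => ρ x * (l x * (l x * w x))) μ :=
    hρ.mul_bdd (hl.mul (hl.mul hw)).aestronglyMeasurable (ae_of_all _ fun x =>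
      abs_mul_le_mul_of_abs_le (hlK x) (abs_mul_le_mul_of_abs_le (hlK x) (hwC x)))
  have hpt : (fun x => (2 * l x * s x - l x ^ 2 * ρ x) * w x)
      = fun x => 2 * (s x * (l x * w x)) - ρ x * (l x * (l x * w x)) := by
    ext x; ring
  rw [hpt, integral_sub hs' hρ', integral_const_mul]
  exact ⟨hs'.sub hρ', rfl⟩

lemma integral_two_mul_mul_sub_sq_mul_mul_le_of_weakL1Tendsto {sₙ ρₙ : ℕ → α → ℝ} {L : ℝ}
    (hρₙ : ∀ n x, 0 < ρₙ n x) (hsₙ_int : ∀ n, Integrable (sₙ n) μ)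
    (hρₙ_int : ∀ n, Integrable (ρₙ n) μ) (hs_int : Integrable s μ) (hρ_int : Integrable ρ μ)
    (hs : WeakL1Tendsto μ sₙ s) (hρ : WeakL1Tendsto μ ρₙ ρ)
    (hw : Measurable w) (hw0 : ∀ x, 0 ≤ w x) (hwC : ∀ x, |w x| ≤ C)
    (hconv_int : ∀ n, Integrable (fun x => sₙ n x ^ 2 / ρₙ n x * w x) μ)
    (hL : Tendsto (fun n => ∫ x, sₙ n x ^ 2 / ρₙ n x * w x ∂μ) atTop (𝓝 L))
    (hl : Measurable l) (hlK : ∀ x, |l x| ≤ K) :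
    ∫ x, (2 * l x * s x - l x ^ 2 * ρ x) * w x ∂μ ≤ L := by
  have hlim := ((hs (fun x => l x * w x) (hl.mul hw)
    ⟨_, fun x => abs_mul_le_mul_of_abs_le (hlK x) (hwC x)⟩).const_mul 2).sub
    (hρ (fun x => l x * (l x * w x)) (hl.mul (hl.mul hw))
      ⟨_, fun x => abs_mul_le_mul_of_abs_le (hlK x) (abs_mul_le_mul_of_abs_le (hlK x) (hwC x))⟩)
  rw [← (integral_two_mul_mul_sub_sq_mul_mul hs_int hρ_int hl hlK hw hwC).2] at hlim
  refine le_of_tendsto_of_tendsto' hlim hL fun n => ?_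
  obtain ⟨hint, heq⟩ := integral_two_mul_mul_sub_sq_mul_mul (hsₙ_int n) (hρₙ_int n) hl hlK hw hwC
  rw [← heq]
  exact integral_mono hint (hconv_int n) fun x =>
    mul_le_mul_of_nonneg_right (two_mul_mul_sub_sq_mul_le_sq_div (hρₙ n x)) (hw0 x)

lemma integral_sq_div_mul_le_of_forall_le {L : ℝ} (hs : AEStronglyMeasurable s μ)
    (hρ : AEStronglyMeasurable ρ μ) (hw : AEStronglyMeasurable w μ) (hwC : ∀ x, |w x| ≤ C)
    (hint : Integrable (fun x => s x ^ 2 / ρ x) μ)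
    (h : ∀ l : α → ℝ, Measurable l → (∃ K, ∀ x, |l x| ≤ K) →
      ∫ x, (2 * l x * s x - l x ^ 2 * ρ x) * w x ∂μ ≤ L) :
    ∫ x, s x ^ 2 / ρ x * w x ∂μ ≤ L := by
  have hq : AEMeasurable (fun x => s x / ρ x) μ := hs.aemeasurable.div hρ.aemeasurable
  set l : ℕ → α → ℝ := fun k x => max (-(k : ℝ)) (min k (hq.mk _ x))
  have hl : ∀ k, Measurable (l k) := fun k =>
    measurable_const.max (measurable_const.min hq.measurable_mk)
  refine le_of_tendsto' (tendsto_integral_of_dominated_convergence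
    (fun x => 3 * |s x ^ 2 / ρ x| * C) (fun k => ?_) ((hint.abs.const_mul 3).mul_const C)
    (fun k => ?_) ?_) fun k => h (l k) (hl k) ⟨k, fun x => abs_max_neg_min_le k.cast_nonneg⟩
  · exact ((((hl k).aestronglyMeasurable.const_mul 2).mul hs).sub
      (((hl k).pow_const 2).aestronglyMeasurable.mul hρ)).mul hw
  · filter_upwards [hq.ae_eq_mk] with x hx
    rw [Real.norm_eq_abs, abs_mul]
    have hlx : |l k x| ≤ |s x / ρ x| := hx ▸ abs_max_neg_min_le_abs k.cast_nonneg
    exact mul_le_mul (abs_two_mul_mul_sub_sq_mul_le hlx) (hwC x) (abs_nonneg _) (by positivity)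
  · filter_upwards [hq.ae_eq_mk] with x hx
    obtain ⟨N, hN⟩ := exists_nat_ge |s x / ρ x|
    refine tendsto_atTop_of_eventually_const (i₀ := N) fun k hk => ?_
    have hlx : l k x = s x / ρ x := by
      simp only [l, ← hx]
      exact max_neg_min_eq_self (hN.trans (Nat.cast_le.2 hk))
    rw [hlx, two_mul_div_mul_sub_div_sq_mul]

end Duality

theorem convective_defect_posSemidef_general (d : ℕ)
    (Ω : Set (Fin d → ℝ)) (hΩb : Bornology.IsBounded Ω)
    (ρn : ℕ → (Fin d → ℝ) → ℝ) (ρ : (Fin d → ℝ) → ℝ)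
    (mn : ℕ → (Fin d → ℝ) → (Fin d → ℝ)) (m : (Fin d → ℝ) → (Fin d → ℝ))
    (hρn_pos : ∀ n x, 0 < ρn n x)
    (hρn_int : ∀ n, IntegrableOn (ρn n) Ω) (hρ_int : IntegrableOn ρ Ω)
    (hmn_int : ∀ n i, IntegrableOn (fun x => mn n x i) Ω)
    (hm_int : ∀ i, IntegrableOn (fun x => m x i) Ω)
    (hρ_weak : ∀ g : (Fin d → ℝ) → ℝ, Measurable g → (∃ C, ∀ x, |g x| ≤ C) →
      Tendsto (fun n => ∫ x in Ω, ρn n x * g x) atTop (𝓝 (∫ x in Ω, ρ x * g x)))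
    (hm_weak : ∀ i, ∀ g : (Fin d → ℝ) → ℝ, Measurable g → (∃ C, ∀ x, |g x| ≤ C) →
      Tendsto (fun n => ∫ x in Ω, mn n x i * g x) atTop
        (𝓝 (∫ x in Ω, m x i * g x)))
    (hconv_int : ∀ n i j, IntegrableOn (fun x => mn n x i * mn n x j / ρn n x) Ω)
    (Rfun : Fin d → Fin d → (((Fin d → ℝ) → ℝ) → ℝ))
    (hRlim : ∀ i j, ∀ φ : (Fin d → ℝ) → ℝ, Continuous φ →
      Tendsto (fun n => ∫ x in Ω, (mn n x i * mn n x j / ρn n x) * φ x) atTop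
        (𝓝 (Rfun i j φ)))
    (hlim_int : ∀ ξ : Fin d → ℝ,
      IntegrableOn (fun x => (∑ i, m x i * ξ i) ^ 2 / ρ x) Ω) :
    ∀ ξ : Fin d → ℝ, ∀ φ : (Fin d → ℝ) → ℝ, Continuous φ → (∀ x, 0 ≤ φ x) →
      ∫ x in Ω, ((∑ i, m x i * ξ i) ^ 2 / ρ x) * φ x
        ≤ ∑ i, ∑ j, ξ i * ξ j * Rfun i j φ := by
  intro ξ φ hφc hφ0
  -- the weak limits only accept globally bounded test functions, so `φ` is cut off at its
  -- bound on `closure Ω`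
  obtain ⟨C, hC⟩ := hΩb.isCompact_closure.exists_bound_of_continuousOn hφc.continuousOn
  set Φ : (Fin d → ℝ) → ℝ := fun x => min (φ x) |C|
  have hΦ : Continuous Φ := hφc.min continuous_const
  have hΦ0 : ∀ x, 0 ≤ Φ x := fun x => le_min (hφ0 x) (abs_nonneg C)
  have hΦC : ∀ x, |Φ x| ≤ |C| := fun x => (abs_of_nonneg (hΦ0 x)).trans_le (min_le_right _ _)
  have hΦφ : Φ =ᵐ[volume.restrict Ω] φ := by
    filter_upwards [ae_restrict_of_ae_restrict_of_subset subset_closure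
      (ae_restrict_mem isClosed_closure.measurableSet)] with x hx
    exact min_eq_left ((le_abs_self _).trans ((hC x hx).trans (le_abs_self C)))
  have hR_int : ∀ n i j, IntegrableOn (fun x => mn n x i * mn n x j / ρn n x * Φ x) Ω :=
    fun n i j => (hconv_int n i j).mul_bdd hΦ.aestronglyMeasurable (ae_of_all _ hΦC)
  have hL : Tendsto (fun n => ∫ x in Ω, (∑ i, mn n x i * ξ i) ^ 2 / ρn n x * Φ x) atTop
      (𝓝 (∑ i, ∑ j, ξ i * ξ j * Rfun i j φ)) := by
    have hΦ_eq : ∀ n i j, ∫ x in Ω, mn n x i * mn n x j / ρn n x * Φ x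
        = ∫ x in Ω, mn n x i * mn n x j / ρn n x * φ x := fun n i j =>
      integral_congr_ae (hΦφ.mono fun x hx => congrArg _ hx)
    simp only [integral_sum_mul_sq_div_mul ξ (hR_int _), hΦ_eq]
    exact tendsto_finsetSum _ fun i _ => tendsto_finsetSum _ fun j _ =>
      (hRlim i j φ hφc).const_mul _
  have hs_int : ∀ {f : (Fin d → ℝ) → Fin d → ℝ}, (∀ i, IntegrableOn (fun x => f x i) Ω) →
      IntegrableOn (fun x => ∑ i, f x i * ξ i) Ω := fun hf =>
    integrable_finsetSum _ fun i _ => (hf i).mul_const (ξ i)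
  rw [integral_congr_ae (hΦφ.mono fun x hx => congrArg _ hx.symm)]
  exact integral_sq_div_mul_le_of_forall_le (hs_int hm_int).1 hρ_int.1 hΦ.aestronglyMeasurable
    hΦC (hlim_int ξ) fun l hl ⟨_, hlK⟩ =>
      integral_two_mul_mul_sub_sq_mul_mul_le_of_weakL1Tendsto hρn_pos
        (fun n => hs_int (hmn_int n)) hρn_int (hs_int hm_int) hρ_int
        (WeakL1Tendsto.sum_mul_const ξ hmn_int hm_int hm_weak) hρ_weak hΦ.measurable hΦ0 hΦC
        (fun n => integrable_sum_mul_sq_div_mul ξ (hR_int n)) hL hl hlK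

/-- If `mₙ ⇀ m`, `ρₙ ⇀ ρ` weakly in `L¹` with `ρₙ > 0`, and the convective terms
`(mₙ ⊗ mₙ)/ρₙ` converge weakly-* to a matrix-valued measure `R` (represented by
its action `Rfun i j φ` on continuous test functions), then for every `ξ ∈ ℝᵈ`
the measure `R:(ξ⊗ξ) − (|m·ξ|²/ρ) dx` is non-negative, i.e. the defect
`R − (m⊗m)/ρ dx` takes values in positive semi-definite matrices. -/
theorem convective_defect_posSemidef (d : ℕ)
    (Ω : Set (Fin d → ℝ)) (hΩb : Bornology.IsBounded Ω) (hΩm : MeasurableSet Ω)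
    (ρn : ℕ → (Fin d → ℝ) → ℝ) (ρ : (Fin d → ℝ) → ℝ)
    (mn : ℕ → (Fin d → ℝ) → (Fin d → ℝ)) (m : (Fin d → ℝ) → (Fin d → ℝ))
    (hρn_pos : ∀ n x, 0 < ρn n x) (hρ_nonneg : ∀ x, 0 ≤ ρ x)
    (hρn_int : ∀ n, IntegrableOn (ρn n) Ω) (hρ_int : IntegrableOn ρ Ω)
    (hmn_int : ∀ n i, IntegrableOn (fun x => mn n x i) Ω)
    (hm_int : ∀ i, IntegrableOn (fun x => m x i) Ω)
    (hρ_weak : ∀ g : (Fin d → ℝ) → ℝ, Measurable g → (∃ C, ∀ x, |g x| ≤ C) →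
      Tendsto (fun n => ∫ x in Ω, ρn n x * g x) atTop (𝓝 (∫ x in Ω, ρ x * g x)))
    (hm_weak : ∀ i, ∀ g : (Fin d → ℝ) → ℝ, Measurable g → (∃ C, ∀ x, |g x| ≤ C) →
      Tendsto (fun n => ∫ x in Ω, mn n x i * g x) atTop
        (𝓝 (∫ x in Ω, m x i * g x)))
    (hconv_int : ∀ n i j, IntegrableOn (fun x => mn n x i * mn n x j / ρn n x) Ω)
    (Rfun : Fin d → Fin d → (((Fin d → ℝ) → ℝ) → ℝ))
    (hRlim : ∀ i j, ∀ φ : (Fin d → ℝ) → ℝ, Continuous φ →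
      Tendsto (fun n => ∫ x in Ω, (mn n x i * mn n x j / ρn n x) * φ x) atTop
        (𝓝 (Rfun i j φ)))
    (hlim_int : ∀ ξ : Fin d → ℝ,
      IntegrableOn (fun x => (∑ i, m x i * ξ i) ^ 2 / ρ x) Ω) :
    ∀ ξ : Fin d → ℝ, ∀ φ : (Fin d → ℝ) → ℝ, Continuous φ → (∀ x, 0 ≤ φ x) →
      ∫ x in Ω, ((∑ i, m x i * ξ i) ^ 2 / ρ x) * φ x
        ≤ ∑ i, ∑ j, ξ i * ξ j * Rfun i j φ :=
  convective_defect_posSemidef_general d Ω hΩb ρn ρ mn m hρn_pos hρn_int hρ_int hmn_int hm_int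
    hρ_weak hm_weak hconv_int Rfun hRlim hlim_int
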